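/- Let X be a nonempty finite set, p a probability vector on X with positive entries, d : X × X → [0,∞), s_D ≥ 0, s_P ≥ 0, and f : (0,∞) → ℝ convex and differentiable with f(1) = 0; set g(a,b) := f(a/b) − (a/b)·f'(a/b). Let u and v be probability vectors on X with positive entries and define A(x,y) := exp(−s_D·d(x,y) − s_P·g(p(y), v(y))), Z(x) := Σ_y u(y)A(x,y), c(y) := Σ_x p(x)A(x,y)/Z(x), and c_max := max_y c(y). Then for all real D, P and every stochastic matrix Q on X with positive output marginal Qm satisfying Σ_{x,y} p(x)Q(y|x)d(x,y) ≤ D and D_f(p||Qm) ≤ P, one has I(p,Q) ≥ −s_D·D − s_P·P − Σ_x p(x)·log Z(x) + s_P·Σ_y p(y)·f'(p(y)/v(y)) − log c_max. In particular, the rate-distortion-perception function satisfies R(D,P) ≥ −s_D·D − s_P·P − Σ_x p(x)·log Z(x) + s_P·Σ_y p(y)·f'(p(y)/v(y)) − log c_max. -/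

import Mathlib

/-! The tangent line of the convex `f` at `p(y)/v(y)` gives
`Qm(y) f(p(y)/Qm(y)) ≥ Qm(y) g(p(y),v(y)) + p(y) f'(p(y)/v(y))`, which makes the perception
constraint linear in `Qm`. Gibbs' inequality for each row `Q(·|x)` against the weights
`Qm(y) A(x,y)` gives `I(p,Q) ≥ E[log A] − Σ_x p(x) log Σ_y Qm(y) A(x,y)`, and
`E[log A] = −s_D E[d] − s_P Σ_y Qm(y) g(p(y),v(y))`. Jensen's inequality for `log` bounds
`Σ_x p(x) log Σ_y Qm(y) A(x,y)` by `Σ_x p(x) log Z(x) + log Σ_y Qm(y) c(y)`, and the average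
of `c` is at most `c_max`. Adding these with the weights `s_D, s_P ≥ 0` gives the bound. -/

namespace RDP

variable {X : Type*}

/-- Output marginal of a channel `Q` under input distribution `p`. -/
noncomputable def marg [Fintype X] (p : X → ℝ) (Q : X → X → ℝ) (y : X) : ℝ :=
  ∑ x, p x * Q x y

/-- Mutual information `I(p,Q) = Σ_{x,y} p(x)Q(y|x) log(Q(y|x)/Qm(y))`
(the convention `0 · log 0 = 0` holds since `Real.log 0 = 0`). -/
noncomputable def mutInfo [Fintype X] (p : X → ℝ) (Q : X → X → ℝ) : ℝ :=
  ∑ x, ∑ y, p x * Q x y * Real.log (Q x y / marg p Q y)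

/-- Average distortion `Σ_{x,y} p(x)Q(y|x) d(x,y)`. -/
noncomputable def distortion [Fintype X] (p : X → ℝ) (d : X → X → ℝ) (Q : X → X → ℝ) : ℝ :=
  ∑ x, ∑ y, p x * Q x y * d x y

/-- f-divergence `D_f(p‖q) = Σ_x q(x) f(p(x)/q(x))`. -/
noncomputable def fDiv [Fintype X] (f : ℝ → ℝ) (p q : X → ℝ) : ℝ :=
  ∑ x, q x * f (p x / q x)

/-- `Q` is a stochastic matrix: nonnegative entries with unit row sums. -/
def IsStochastic [Fintype X] (Q : X → X → ℝ) : Prop :=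
  (∀ x y, 0 ≤ Q x y) ∧ ∀ x, ∑ y, Q x y = 1

/-- The rate-distortion-perception function
`R(D,P) = inf { I(p,Q) : Q stochastic, positive output marginal, distortion ≤ D, D_f ≤ P }`,
with values in `EReal` so that the infimum of the empty set is `⊤`. -/
noncomputable def RDPF [Fintype X] (p : X → ℝ) (d : X → X → ℝ) (f : ℝ → ℝ)
    (D P : ℝ) : EReal :=
  sInf {r : EReal | ∃ Q : X → X → ℝ, IsStochastic Q ∧ (∀ y, 0 < marg p Q y) ∧
    distortion p d Q ≤ D ∧ fDiv f p (marg p Q) ≤ P ∧ r = (mutInfo p Q : EReal)}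

/-- The Lagrangian `V(Q) = I(p,Q) + s_D · E[d] + s_P · D_f(p‖Qm)`. -/
noncomputable def Vfun [Fintype X] (p : X → ℝ) (d : X → X → ℝ) (sD sP : ℝ) (f : ℝ → ℝ)
    (Q : X → X → ℝ) : ℝ :=
  mutInfo p Q + sD * distortion p d Q + sP * fDiv f p (marg p Q)

/-- `μ` is a (complex) eigenvalue of the matrix `M`. -/
def HasEig [Fintype X] (M : Matrix X X ℂ) (μ : ℂ) : Prop :=
  ∃ v : X → ℂ, v ≠ 0 ∧ M.mulVec v = μ • v

theorem _root_.ConvexOn.add_mul_sub_le_of_hasDerivAt {S : Set ℝ} {f : ℝ → ℝ} {x y f'x : ℝ}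
    (hfc : ConvexOn ℝ S f) (hx : x ∈ S) (hy : y ∈ S) (hf : HasDerivAt f f'x x) :
    f x + f'x * (y - x) ≤ f y := by
  rcases lt_trichotomy x y with hxy | rfl | hxy
  · have h := hfc.le_slope_of_hasDerivAt hx hy hxy hf
    rw [slope_def_field, le_div_iff₀ (sub_pos.2 hxy)] at h
    linarith
  · simp
  · have h := hfc.slope_le_of_hasDerivAt hy hx hxy hf
    rw [slope_def_field, div_le_iff₀ (sub_pos.2 hxy)] at h
    linarith

theorem _root_.Real.sub_le_mul_log_div {q r : ℝ} (hq : 0 ≤ q) (hr : 0 < r) :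
    q - r ≤ q * Real.log (q / r) := by
  have h := mul_le_mul_of_nonneg_left (Real.self_sub_one_le_mul_log (div_nonneg hq hr.le)) hr.le
  rwa [mul_sub, mul_div_cancel₀ _ hr.ne', mul_one, ← mul_assoc, mul_div_cancel₀ _ hr.ne'] at h

theorem _root_.Real.neg_log_sum_le_sum_mul_log_div {ι : Type*} [Fintype ι] {q m : ι → ℝ}
    (hq : ∀ i, 0 ≤ q i) (hq1 : ∑ i, q i = 1) (hm : ∀ i, 0 < m i) :
    -Real.log (∑ i, m i) ≤ ∑ i, q i * Real.log (q i / m i) := by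
  obtain ⟨i₀, -, -⟩ := Finset.exists_ne_zero_of_sum_ne_zero (hq1 ▸ one_ne_zero)
  set S := ∑ i, m i
  have hS : 0 < S := Finset.sum_pos (fun i _ => hm i) ⟨i₀, Finset.mem_univ _⟩
  have hterm : ∀ i, q i - m i / S ≤ q i * Real.log (q i / m i) + q i * Real.log S := by
    intro i
    rcases (hq i).eq_or_lt with h | h
    · rw [← h]; simp only [zero_sub, zero_mul, add_zero]
      exact neg_nonpos.2 (div_nonneg (hm i).le hS.le)
    · have := Real.sub_le_mul_log_div (hq i) (div_pos (hm i) hS)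
      rwa [div_div_eq_mul_div, mul_div_right_comm,
        Real.log_mul (div_pos h (hm i)).ne' hS.ne', mul_add] at this
  have hsum := Finset.sum_le_sum fun i (_ : i ∈ Finset.univ) => hterm i
  rw [Finset.sum_sub_distrib, Finset.sum_add_distrib, ← Finset.sum_div, ← Finset.sum_mul, hq1,
    div_self hS.ne', one_mul] at hsum
  linarith

section

variable [Fintype X]

theorem sum_sum_mul_eq_sum_marg_mul (p : X → ℝ) (Q : X → X → ℝ) (h : X → ℝ) :
    ∑ x, ∑ y, p x * Q x y * h y = ∑ y, marg p Q y * h y := by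
  rw [Finset.sum_comm]
  simp only [marg, Finset.sum_mul]

theorem sum_marg_eq_one {p : X → ℝ} (hp1 : ∑ x, p x = 1) {Q : X → X → ℝ}
    (hQ : IsStochastic Q) : ∑ y, marg p Q y = 1 := by
  calc ∑ y, marg p Q y = ∑ x, ∑ y, p x * Q x y * 1 := by
        rw [sum_sum_mul_eq_sum_marg_mul]; simp
    _ = 1 := by simp [← Finset.mul_sum, hQ.2, hp1]

theorem sum_mul_sub_add_sum_le_fDiv {f f' : ℝ → ℝ} (hfc : ConvexOn ℝ (Set.Ioi 0) f)
    (hf' : ∀ x ∈ Set.Ioi (0 : ℝ), HasDerivAt f (f' x) x) {p m t : X → ℝ}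
    (hp : ∀ y, 0 < p y) (hm : ∀ y, 0 < m y) (ht : ∀ y, 0 < t y) :
    ∑ y, m y * (f (t y) - t y * f' (t y)) + ∑ y, p y * f' (t y) ≤ fDiv f p m := by
  rw [fDiv, ← Finset.sum_add_distrib]
  refine Finset.sum_le_sum fun y _ => ?_
  have hmy := (hm y).ne'
  have h := hfc.add_mul_sub_le_of_hasDerivAt (ht y) (div_pos (hp y) (hm y)) (hf' _ (ht y))
  calc m y * (f (t y) - t y * f' (t y)) + p y * f' (t y)
      = m y * (f (t y) + f' (t y) * (p y / m y - t y)) := by field_simp; ring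
    _ ≤ m y * f (p y / m y) := mul_le_mul_of_nonneg_left h (hm y).le

theorem sum_sum_mul_log_sub_sum_mul_log_le_mutInfo {p : X → ℝ} (hp : ∀ x, 0 ≤ p x)
    {Q : X → X → ℝ} (hQ : IsStochastic Q) (hm : ∀ y, 0 < marg p Q y)
    {A : X → X → ℝ} (hA : ∀ x y, 0 < A x y) :
    ∑ x, ∑ y, p x * Q x y * Real.log (A x y)
      - ∑ x, p x * Real.log (∑ y, marg p Q y * A x y) ≤ mutInfo p Q := by
  have hrow : ∀ x, -Real.log (∑ y, marg p Q y * A x y)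
      ≤ ∑ y, (Q x y * Real.log (Q x y / marg p Q y) - Q x y * Real.log (A x y)) := by
    intro x
    convert Real.neg_log_sum_le_sum_mul_log_div (hQ.1 x) (hQ.2 x)
      (fun y => mul_pos (hm y) (hA x y)) using 2 with y
    rcases eq_or_ne (Q x y) 0 with h | h
    · simp [h]
    · rw [← div_div, Real.log_div (div_ne_zero h (hm y).ne') (hA x y).ne']
      ring
  have h := Finset.sum_le_sum fun x (_ : x ∈ Finset.univ) =>
    mul_le_mul_of_nonneg_left (hrow x) (hp x)
  simp only [mul_neg, Finset.sum_neg_distrib, Finset.mul_sum, mul_sub, Finset.sum_sub_distrib,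
    ← mul_assoc] at h
  rw [mutInfo]
  linarith

theorem sum_mul_log_sum_le_sum_mul_log_add_log {p : X → ℝ} (hp : ∀ x, 0 ≤ p x)
    (hp1 : ∑ x, p x = 1)
    {m Z : X → ℝ} (hm : ∀ y, 0 < m y) (hZ : ∀ x, 0 < Z x)
    {A : X → X → ℝ} (hA : ∀ x y, 0 < A x y) :
    ∑ x, p x * Real.log (∑ y, m y * A x y)
      ≤ ∑ x, p x * Real.log (Z x) + Real.log (∑ y, m y * ∑ x, p x * A x y / Z x) := by
  obtain ⟨x₀, -, -⟩ := Finset.exists_ne_zero_of_sum_ne_zero (hp1 ▸ one_ne_zero)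
  have hS : ∀ x, 0 < ∑ y, m y * A x y := fun x =>
    Finset.sum_pos (fun y _ => mul_pos (hm y) (hA x y)) ⟨x₀, Finset.mem_univ _⟩
  have hJensen := strictConcaveOn_log_Ioi.concaveOn.le_map_sum (t := Finset.univ)
    (fun x _ => hp x) hp1 (fun x _ => div_pos (hS x) (hZ x))
  simp only [smul_eq_mul] at hJensen
  have hsplit : ∀ x, Real.log (∑ y, m y * A x y)
      = Real.log (Z x) + Real.log ((∑ y, m y * A x y) / Z x) := fun x => by
    rw [Real.log_div (hS x).ne' (hZ x).ne']; ring
  have hswap :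
      ∑ x, p x * ((∑ y, m y * A x y) / Z x) = ∑ y, m y * ∑ x, p x * A x y / Z x := by
    simp only [Finset.mul_sum, Finset.sum_div]
    rw [Finset.sum_comm]
    exact Finset.sum_congr rfl fun y _ => Finset.sum_congr rfl fun x _ => by ring
  simp only [hsplit, mul_add, Finset.sum_add_distrib]
  rw [← hswap]
  linarith

theorem coe_le_RDPF_of_forall_le_mutInfo {p : X → ℝ} {d : X → X → ℝ} {f : ℝ → ℝ}
    {D P b : ℝ}
    (h : ∀ Q : X → X → ℝ, IsStochastic Q → (∀ y, 0 < marg p Q y) →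
      distortion p d Q ≤ D → fDiv f p (marg p Q) ≤ P → b ≤ mutInfo p Q) :
    (b : EReal) ≤ RDPF p d f D P := by
  refine le_sInf ?_
  rintro r ⟨Q, hQ, hm, hdist, hdiv, rfl⟩
  exact_mod_cast h Q hQ hm hdist hdiv

end

theorem RDPF_lower_bound_general [Fintype X]
    (p : X → ℝ) (hp : ∀ x, 0 < p x) (hp1 : ∑ x, p x = 1)
    (d : X → X → ℝ)
    (sD sP : ℝ) (hsD : 0 ≤ sD) (hsP : 0 ≤ sP)
    (f f' : ℝ → ℝ) (hfconv : ConvexOn ℝ (Set.Ioi 0) f)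
    (hf' : ∀ x ∈ Set.Ioi (0 : ℝ), HasDerivAt f (f' x) x)
    (u v : X → ℝ) (hu : ∀ i, 0 < u i)
    (hv : ∀ i, 0 < v i)
    (A : X → X → ℝ)
    (hA : ∀ x y, A x y = Real.exp (-(sD * d x y) - sP *
        (f (p y / v y) - p y / v y * f' (p y / v y))))
    (Z : X → ℝ) (hZ : ∀ x, Z x = ∑ y, u y * A x y)
    (c : X → ℝ) (hcdef : ∀ y, c y = ∑ x, p x * A x y / Z x)
    (cmax : ℝ) (hcmax : IsGreatest (Set.range c) cmax) :
    (∀ D P : ℝ, ∀ Q : X → X → ℝ, IsStochastic Q → (∀ y, 0 < marg p Q y) →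
        distortion p d Q ≤ D → fDiv f p (marg p Q) ≤ P →
        -(sD * D) - sP * P - (∑ x, p x * Real.log (Z x))
            + sP * ∑ y, p y * f' (p y / v y) - Real.log cmax ≤ mutInfo p Q)
    ∧ ∀ D P : ℝ,
        ((-(sD * D) - sP * P - (∑ x, p x * Real.log (Z x))
            + sP * ∑ y, p y * f' (p y / v y) - Real.log cmax : ℝ) : EReal)
          ≤ RDPF p d f D P := by
  have hApos : ∀ x y, 0 < A x y := fun x y => (hA x y) ▸ Real.exp_pos _
  have hZpos : ∀ x, 0 < Z x := fun x => (hZ x) ▸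
    Finset.sum_pos (fun y _ => mul_pos (hu y) (hApos x y)) ⟨x, Finset.mem_univ x⟩
  have hcpos : ∀ y, 0 < c y := fun y => (hcdef y) ▸
    Finset.sum_pos (fun x _ => div_pos (mul_pos (hp x) (hApos x y)) (hZpos x))
      ⟨y, Finset.mem_univ y⟩
  refine (fun h => ⟨h, fun D P => coe_le_RDPF_of_forall_le_mutInfo (h D P)⟩) ?_
  intro D P Q hQ hm hdist hdiv
  have hlogA : ∑ x, ∑ y, p x * Q x y * Real.log (A x y) = -(sD * distortion p d Q)
      - sP * ∑ y, marg p Q y * (f (p y / v y) - p y / v y * f' (p y / v y)) := by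
    simp only [hA, Real.log_exp, mul_sub, mul_neg, Finset.sum_sub_distrib,
      Finset.sum_neg_distrib, ← sum_sum_mul_eq_sum_marg_mul, distortion, Finset.mul_sum,
      mul_left_comm _ sD, mul_left_comm _ sP]
  have hc_avg : ∑ y, marg p Q y * c y ≤ cmax := by
    calc ∑ y, marg p Q y * c y ≤ ∑ y, marg p Q y * cmax :=
          Finset.sum_le_sum fun y _ => mul_le_mul_of_nonneg_left (hcmax.2 ⟨y, rfl⟩) (hm y).le
      _ = cmax := by rw [← Finset.sum_mul, sum_marg_eq_one hp1 hQ, one_mul]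
  have hlogc : Real.log (∑ y, marg p Q y * c y) ≤ Real.log cmax := by
    obtain ⟨y₀, -⟩ := hcmax.1
    exact Real.log_le_log (Finset.sum_pos (fun y _ => mul_pos (hm y) (hcpos y))
      ⟨y₀, Finset.mem_univ _⟩) hc_avg
  have hGibbs := sum_sum_mul_log_sub_sum_mul_log_le_mutInfo (fun x => (hp x).le) hQ hm hApos
  have hJensen := sum_mul_log_sum_le_sum_mul_log_add_log (fun x => (hp x).le) hp1 hm hZpos hApos
  simp only [← hcdef] at hJensen
  have hTangent := sum_mul_sub_add_sum_le_fDiv hfconv hf' hp hm (fun y => div_pos (hp y) (hv y))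
  linarith [mul_le_mul_of_nonneg_left hdist hsD, mul_le_mul_of_nonneg_left (hTangent.trans hdiv) hsP]

/-- Lower bound on the rate-distortion-perception function: every feasible `Q` satisfies
`I(p,Q) ≥ −s_D D − s_P P − Σ_x p(x) log Z(x) + s_P Σ_y p(y) f'(p(y)/v(y)) − log c_max`,
and hence so does `R(D,P)`. -/
theorem RDPF_lower_bound [Fintype X] [Nonempty X]
    (p : X → ℝ) (hp : ∀ x, 0 < p x) (hp1 : ∑ x, p x = 1)
    (d : X → X → ℝ) (hd : ∀ x y, 0 ≤ d x y)
    (sD sP : ℝ) (hsD : 0 ≤ sD) (hsP : 0 ≤ sP)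
    (f f' : ℝ → ℝ) (hfconv : ConvexOn ℝ (Set.Ioi 0) f)
    (hf' : ∀ x ∈ Set.Ioi (0 : ℝ), HasDerivAt f (f' x) x) (hf1 : f 1 = 0)
    (u v : X → ℝ) (hu : ∀ i, 0 < u i) (hu1 : ∑ i, u i = 1)
    (hv : ∀ i, 0 < v i) (hv1 : ∑ i, v i = 1)
    (A : X → X → ℝ)
    (hA : ∀ x y, A x y = Real.exp (-(sD * d x y) - sP *
        (f (p y / v y) - p y / v y * f' (p y / v y))))
    (Z : X → ℝ) (hZ : ∀ x, Z x = ∑ y, u y * A x y)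
    (c : X → ℝ) (hcdef : ∀ y, c y = ∑ x, p x * A x y / Z x)
    (cmax : ℝ) (hcmax : IsGreatest (Set.range c) cmax) :
    (∀ D P : ℝ, ∀ Q : X → X → ℝ, IsStochastic Q → (∀ y, 0 < marg p Q y) →
        distortion p d Q ≤ D → fDiv f p (marg p Q) ≤ P →
        -(sD * D) - sP * P - (∑ x, p x * Real.log (Z x))
            + sP * ∑ y, p y * f' (p y / v y) - Real.log cmax ≤ mutInfo p Q)
    ∧ ∀ D P : ℝ,
        ((-(sD * D) - sP * P - (∑ x, p x * Real.log (Z x))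
            + sP * ∑ y, p y * f' (p y / v y) - Real.log cmax : ℝ) : EReal)
          ≤ RDPF p d f D P :=
  RDPF_lower_bound_general p hp hp1 d sD sP hsD hsP f f' hfconv hf' u v hu hv A hA Z hZ c hcdef cmax
    hcmax

end RDP
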